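/- Let X = {0,1}^n (with n ≥ 1), Y a nonempty finite set, and f : X × Y → ℝ with f(x,y) = g(x) + h(x,y) + e(y). Suppose g is invariant under the global bit-flip, g(flip x) = g(x) for all x, and h is anti-symmetric under the bit-flip in the first argument, h(flip x, y) = −h(x, y) for all x, y. If (x*, y*) is a global minimizer of f, then g(x*) ≤ (min g) + sup_{x,y} |h(x,y)|. -/
import Mathlib


/-- Two-body cut-off: with `g` flip-invariant and `h` flip-antisymmetric in the first
argument, a global minimizer `(x*, y*)` of `f = g + h + e` satisfies
`g x* ≤ min g + sup |h|`. -/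
theorem stmt_1 {n : ℕ} (hn : 1 ≤ n) {Y : Type*} [Fintype Y] [Nonempty Y]
    (f : (Fin n → Bool) × Y → ℝ) (g : (Fin n → Bool) → ℝ)
    (h : (Fin n → Bool) × Y → ℝ) (e : Y → ℝ)
    (hdec : ∀ x y, f (x, y) = g x + h (x, y) + e y)
    (hg : ∀ x, g (fun i => !x i) = g x)
    (hh : ∀ x y, h (fun i => !x i, y) = -h (x, y))
    (xs : Fin n → Bool) (ys : Y) (hmin : ∀ p, f (xs, ys) ≤ f p) :
    g xs ≤ Finset.univ.inf' Finset.univ_nonempty g +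
      Finset.univ.sup' Finset.univ_nonempty (fun p => |h p|) := by
  obtain ⟨x0, -, hx0⟩ := Finset.exists_mem_eq_inf' (Finset.univ_nonempty) g
  have h1 := hmin (x0, ys)
  have h2 := hmin ((fun i => !x0 i), ys)
  rw [hdec, hdec] at h1
  rw [hdec, hdec, hg, hh] at h2
  have key : g xs + h (xs, ys) ≤ g x0 := by linarith
  have habs : h (xs, ys) ≥ -|h (xs, ys)| := neg_abs_le _
  have hsup : |h (xs, ys)| ≤ Finset.univ.sup' Finset.univ_nonempty (fun p => |h p|) :=
    Finset.le_sup' (fun p => |h p|) (Finset.mem_univ (xs, ys))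
  linarith [hx0.le, hx0.ge]
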